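/- arXiv:1803.01298 — 4 statements merged into one kernel-verified Lean document; each statement's English description precedes it below -/
import Mathlib

section
/- Let f : ℝⁿ → ℝ be convex and differentiable, ψ : ℝⁿ → ℝ ∪ {+∞} convex, proper, and closed, F = f + ψ with minimizer x* and optimal value F* = F(x*), and suppose F satisfies μ-optimal-set strong convexity at x with respect to x* for some μ > 0. Let H be a symmetric matrix with σI ⪯ H ⪯ MI for some M ≥ σ > 0, let γ ∈ (0,1), η ∈ [0,1), α ∈ (0,1], and suppose d satisfies Q(d) ≤ (1 − η)Q* and the Armijo condition F(x + αd) ≤ F(x) + αγΔ holds. Then F(x + αd) − F* ≤ (1 − αγ(1 − η)μ/(μ + ‖H‖))·(F(x) − F*). -/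
/-
Setting: minimize F = f + ψ over ℝⁿ (modeled as `EuclideanSpace ℝ (Fin n)`), where
f : ℝⁿ → ℝ is smooth and ψ : ℝⁿ → ℝ ∪ {+∞} (modeled as `EReal`-valued, never ⊥)
is convex, proper and closed.  The quadratic model at x with symmetric operator H is
Q(d) = ⟪∇f(x), d⟫ + (1/2)⟪H d, d⟫ + ψ(x+d) − ψ(x), and Δ(d) = ⟪∇f(x), d⟫ + ψ(x+d) − ψ(x).
-/

open scoped RealInnerProductSpace
open Set Filter Topology

noncomputable section

/-- Convexity for extended-real-valued functions (values in ℝ ∪ {±∞}). -/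
def ConvexE {n : ℕ} (g : EuclideanSpace ℝ (Fin n) → EReal) : Prop :=
  ∀ x y : EuclideanSpace ℝ (Fin n), ∀ a b : ℝ, 0 ≤ a → 0 ≤ b → a + b = 1 →
    g (a • x + b • y) ≤ (a : EReal) * g x + (b : EReal) * g y

/-- ψ is proper: it never takes the value −∞ (its values lie in ℝ ∪ {+∞})
and it is finite somewhere. -/
def ProperPsi {n : ℕ} (ψ : EuclideanSpace ℝ (Fin n) → EReal) : Prop :=
  (∀ x, ψ x ≠ ⊥) ∧ ∃ x, ψ x ≠ ⊤

/-- ψ is closed, i.e. lower semicontinuous. -/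
def ClosedPsi {n : ℕ} (ψ : EuclideanSpace ℝ (Fin n) → EReal) : Prop :=
  LowerSemicontinuous ψ

/-- H is a symmetric (self-adjoint) linear operator. -/
def SymmCLM {n : ℕ} (H : EuclideanSpace ℝ (Fin n) →L[ℝ] EuclideanSpace ℝ (Fin n)) : Prop :=
  ∀ u v, ⟪H u, v⟫ = ⟪u, H v⟫

/-- m is the smallest eigenvalue of the symmetric operator H
(characterized as the minimum of the Rayleigh quotient over the unit sphere). -/
def IsSmallestEigenvalue {n : ℕ} (H : EuclideanSpace ℝ (Fin n) →L[ℝ] EuclideanSpace ℝ (Fin n))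
    (m : ℝ) : Prop :=
  IsLeast {r : ℝ | ∃ u : EuclideanSpace ℝ (Fin n), ‖u‖ = 1 ∧ r = ⟪H u, u⟫} m

/-- The objective F = f + ψ (extended-real-valued). -/
def Fm {n : ℕ} (f : EuclideanSpace ℝ (Fin n) → ℝ) (ψ : EuclideanSpace ℝ (Fin n) → EReal)
    (x : EuclideanSpace ℝ (Fin n)) : EReal :=
  (f x : EReal) + ψ x

/-- The quadratic model Q(d) = ∇f(x)ᵀd + (1/2)dᵀHd + ψ(x+d) − ψ(x). -/
def Qm {n : ℕ} (f : EuclideanSpace ℝ (Fin n) → ℝ) (ψ : EuclideanSpace ℝ (Fin n) → EReal)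
    (H : EuclideanSpace ℝ (Fin n) →L[ℝ] EuclideanSpace ℝ (Fin n))
    (x d : EuclideanSpace ℝ (Fin n)) : EReal :=
  ((⟪gradient f x, d⟫ + 1 / 2 * ⟪H d, d⟫ : ℝ) : EReal) + ψ (x + d) - ψ x

/-- Δ(d) = ∇f(x)ᵀd + ψ(x+d) − ψ(x). -/
def Dm {n : ℕ} (f : EuclideanSpace ℝ (Fin n) → ℝ) (ψ : EuclideanSpace ℝ (Fin n) → EReal)
    (x d : EuclideanSpace ℝ (Fin n)) : EReal :=
  ((⟪gradient f x, d⟫ : ℝ) : EReal) + ψ (x + d) - ψ x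

/-- g is σ-strongly convex: g − (σ/2)‖·‖² is convex. -/
def StrongConvexE {n : ℕ} (σ : ℝ) (g : EuclideanSpace ℝ (Fin n) → EReal) : Prop :=
  ConvexE (fun d => g d - ((σ / 2 * ‖d‖ ^ 2 : ℝ) : EReal))

/-- The solution set Ω = argmin F. -/
def SolSet {n : ℕ} (f : EuclideanSpace ℝ (Fin n) → ℝ)
    (ψ : EuclideanSpace ℝ (Fin n) → EReal) : Set (EuclideanSpace ℝ (Fin n)) :=
  {y | ∀ z, Fm f ψ y ≤ Fm f ψ z}

/-!
By convexity of `f`, the model overestimates `F` only through its curvature term: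
`Q(e) ≤ F(x + e) - F(x) + ‖H‖ ‖e‖² / 2`. Along `e = λ (x* - x)`, optimal-set strong convexity
bounds the right-hand side by `λ (F* - F(x))` as soon as `λ = μ / (μ + ‖H‖)`, the value at which
the curvature term `‖H‖ λ² ‖x - x*‖² / 2` cancels the strong-convexity gain
`μ λ (1 - λ) ‖x - x*‖² / 2`. Hence `Δ(d) ≤ Q(d) ≤ (1 - η) Q* ≤ -(1 - η) λ (F(x) - F*)`,
and the Armijo condition turns this into the claimed contraction.
-/

theorem ConvexOn.inner_gradient_le_sub {E : Type*} [NormedAddCommGroup E]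
    [InnerProductSpace ℝ E] [CompleteSpace E] {f : E → ℝ} (hfc : ConvexOn ℝ univ f) {x : E}
    (hf : DifferentiableAt ℝ f x) (e : E) :
    ⟪gradient f x, e⟫ ≤ f (x + e) - f x := by
  set ℓ : ℝ →ᵃ[ℝ] E := AffineMap.lineMap x (x + e)
  have hℓ : HasDerivAt ℓ e 0 := by
    simpa using AffineMap.hasDerivAt_lineMap (a := x) (b := x + e) (x := (0 : ℝ))
  have hfℓ : HasDerivAt (f ∘ ℓ) ⟪gradient f x, e⟫ 0 := by
    rw [← AffineMap.lineMap_apply_zero (k := ℝ) x (x + e)] at hf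
    simpa [ℓ] using hf.hasGradientAt.hasFDerivAt.comp_hasDerivAt (0 : ℝ) hℓ
  simpa [slope, ℓ, AffineMap.lineMap_apply_module] using
    (hfc.comp_affineMap ℓ).le_slope_of_hasDerivAt (mem_univ 0) (mem_univ 1) one_pos hfℓ

theorem ContinuousLinearMap.real_inner_map_self_le {E : Type*} [NormedAddCommGroup E]
    [InnerProductSpace ℝ E] (T : E →L[ℝ] E) (e : E) : ⟪T e, e⟫ ≤ ‖T‖ * ‖e‖ ^ 2 :=
  calc ⟪T e, e⟫ ≤ ‖T e‖ * ‖e‖ := real_inner_le_norm _ _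
    _ ≤ ‖T‖ * ‖e‖ * ‖e‖ := by gcongr; exact T.le_opNorm e
    _ = ‖T‖ * ‖e‖ ^ 2 := by ring

section QuadraticModel

variable {n : ℕ} {f : EuclideanSpace ℝ (Fin n) → ℝ} {ψ : EuclideanSpace ℝ (Fin n) → EReal}
  {H : EuclideanSpace ℝ (Fin n) →L[ℝ] EuclideanSpace ℝ (Fin n)} {x : EuclideanSpace ℝ (Fin n)}

theorem Fm_ne_bot (hψ : ∀ y, ψ y ≠ ⊥) (y : EuclideanSpace ℝ (Fin n)) : Fm f ψ y ≠ ⊥ := by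
  simp [Fm, EReal.add_eq_bot_iff, hψ y]

theorem Fm_ne_top (hψ : ψ x ≠ ⊤) : Fm f ψ x ≠ ⊤ :=
  EReal.add_ne_top (EReal.coe_ne_top _) hψ

theorem Dm_le_Qm {d : EuclideanSpace ℝ (Fin n)} (hd : 0 ≤ ⟪H d, d⟫) :
    Dm f ψ x d ≤ Qm f ψ H x d := by
  refine EReal.sub_le_sub (add_le_add ?_ le_rfl) le_rfl
  exact EReal.coe_le_coe_iff.mpr (by linarith)

theorem Qm_le_Fm_sub_Fm_add (hfc : ConvexOn ℝ univ f) (hf : DifferentiableAt ℝ f x)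
    (hx : ψ x ≠ ⊤) (hx' : ψ x ≠ ⊥) (e : EuclideanSpace ℝ (Fin n)) :
    Qm f ψ H x e ≤ Fm f ψ (x + e) - Fm f ψ x + ((⟪H e, e⟫ / 2 : ℝ) : EReal) := by
  have hgrad := hfc.inner_gradient_le_sub hf e
  unfold Qm Fm
  rw [← EReal.coe_toReal hx hx']
  induction ψ (x + e) using EReal.rec with
  | bot => simp
  | top =>
    simp only [EReal.add_top_of_ne_bot (EReal.coe_ne_bot _), ← EReal.coe_add, EReal.top_sub_coe,
      EReal.top_add_coe, le_refl]
  | coe p => norm_cast; linarith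

theorem iInf_Qm_le (hfc : ConvexOn ℝ univ f) (hf : DifferentiableAt ℝ f x)
    (hx : ψ x ≠ ⊤) (hx' : ψ x ≠ ⊥) {xstar : EuclideanSpace ℝ (Fin n)} {Fx Fs μ : ℝ}
    (hFx : Fm f ψ x = Fx) (hFs : Fm f ψ xstar = Fs) (hμ : 0 < μ)
    (hossc : ∀ lam : ℝ, lam ∈ Set.Icc (0 : ℝ) 1 →
        Fm f ψ (lam • x + (1 - lam) • xstar) ≤
          ((lam : ℝ) : EReal) * Fm f ψ x + ((1 - lam : ℝ) : EReal) * Fm f ψ xstar -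
            ((μ * lam * (1 - lam) / 2 * ‖x - xstar‖ ^ 2 : ℝ) : EReal)) :
    ⨅ e, Qm f ψ H x e ≤ ((μ / (μ + ‖H‖) * (Fs - Fx) : ℝ) : EReal) := by
  set lam := μ / (μ + ‖H‖)
  set e := lam • (xstar - x)
  have hden : 0 < μ + ‖H‖ := by positivity
  have hlam : 0 ≤ lam ∧ lam ≤ 1 := ⟨by positivity, (div_le_one hden).mpr (by simp)⟩
  have hcancel : ‖H‖ * lam = μ * (1 - lam) := by
    linear_combination div_mul_cancel₀ μ hden.ne'
  have hFe : Fm f ψ (x + e) ≤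
      (((1 - lam) * Fx + lam * Fs - μ * (1 - lam) * lam / 2 * ‖x - xstar‖ ^ 2 : ℝ) : EReal) := by
    have h := hossc (1 - lam) ⟨by linarith, by linarith⟩
    rw [hFx, hFs, sub_sub_cancel] at h
    convert h using 2
    · simp only [e]; module
    · norm_cast
  have hHe : ⟪H e, e⟫ ≤ ‖H‖ * (lam ^ 2 * ‖x - xstar‖ ^ 2) := by
    have : ‖e‖ = lam * ‖x - xstar‖ := by
      rw [norm_smul, norm_sub_rev, Real.norm_of_nonneg hlam.1]
    simpa [this, mul_pow] using H.real_inner_map_self_le e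
  calc ⨅ e, Qm f ψ H x e ≤ Qm f ψ H x e := iInf_le _ e
    _ ≤ Fm f ψ (x + e) - Fx + ((⟪H e, e⟫ / 2 : ℝ) : EReal) :=
      hFx ▸ Qm_le_Fm_sub_Fm_add hfc hf hx hx' e
    _ ≤ (((1 - lam) * Fx + lam * Fs - μ * (1 - lam) * lam / 2 * ‖x - xstar‖ ^ 2 : ℝ) : EReal) -
          Fx + ((‖H‖ * (lam ^ 2 * ‖x - xstar‖ ^ 2) / 2 : ℝ) : EReal) := by
      gcongr
      exact EReal.sub_le_sub hFe le_rfl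
    _ = _ := by
      norm_cast
      linear_combination lam * ‖x - xstar‖ ^ 2 / 2 * hcancel

end QuadraticModel

theorem linear_rate_step_armijo_general {n : ℕ}
    (f : EuclideanSpace ℝ (Fin n) → ℝ) (ψ : EuclideanSpace ℝ (Fin n) → EReal)
    (H : EuclideanSpace ℝ (Fin n) →L[ℝ] EuclideanSpace ℝ (Fin n))
    (x xstar d : EuclideanSpace ℝ (Fin n)) (μ σ γ η α : ℝ)
    (hf : Differentiable ℝ f) (hfconv : ConvexOn ℝ Set.univ f)
    (hψproper : ProperPsi ψ)
    (hdom : ψ x ≠ ⊤)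
    (hmin : ∀ y, Fm f ψ xstar ≤ Fm f ψ y)
    (hμ : 0 < μ)
    (hossc : ∀ lam : ℝ, lam ∈ Set.Icc (0 : ℝ) 1 →
        Fm f ψ (lam • x + (1 - lam) • xstar) ≤
          ((lam : ℝ) : EReal) * Fm f ψ x + ((1 - lam : ℝ) : EReal) * Fm f ψ xstar -
            ((μ * lam * (1 - lam) / 2 * ‖x - xstar‖ ^ 2 : ℝ) : EReal))
    (hσ : 0 < σ)
    (hHlb : ∀ e : EuclideanSpace ℝ (Fin n), σ * ‖e‖ ^ 2 ≤ ⟪H e, e⟫)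
    (hγ0 : 0 < γ) (hη1 : η < 1)
    (hα0 : 0 < α)
    (happrox : Qm f ψ H x d ≤ ((1 - η : ℝ) : EReal) * ⨅ e, Qm f ψ H x e)
    (harmijo : Fm f ψ (x + α • d) ≤ Fm f ψ x + ((α * γ : ℝ) : EReal) * Dm f ψ x d) :
    Fm f ψ (x + α • d) - Fm f ψ xstar ≤
      ((1 - α * γ * (1 - η) * μ / (μ + ‖H‖) : ℝ) : EReal) * (Fm f ψ x - Fm f ψ xstar) := by
  obtain ⟨hψbot, -⟩ := hψproper
  obtain ⟨Fx, hFx⟩ : ∃ Fx : ℝ, Fm f ψ x = Fx :=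
    ⟨_, (EReal.coe_toReal (Fm_ne_top hdom) (Fm_ne_bot hψbot x)).symm⟩
  obtain ⟨Fs, hFs⟩ : ∃ Fs : ℝ, Fm f ψ xstar = Fs :=
    ⟨_, (EReal.coe_toReal (ne_top_of_le_ne_top (hFx ▸ EReal.coe_ne_top Fx) (hmin x))
      (Fm_ne_bot hψbot xstar)).symm⟩
  set lam := μ / (μ + ‖H‖)
  have hΔ : Dm f ψ x d ≤ ((-((1 - η) * lam * (Fx - Fs)) : ℝ) : EReal) :=
    calc Dm f ψ x d ≤ Qm f ψ H x d := Dm_le_Qm ((by positivity : 0 ≤ σ * ‖d‖ ^ 2).trans (hHlb d))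
      _ ≤ ((1 - η : ℝ) : EReal) * ((lam * (Fs - Fx) : ℝ) : EReal) := by
        refine happrox.trans (mul_le_mul_of_nonneg_left ?_ (by exact_mod_cast (by linarith)))
        exact iInf_Qm_le hfconv (hf x) hdom (hψbot x) hFx hFs hμ hossc
      _ = _ := by norm_cast; ring_nf
  calc Fm f ψ (x + α • d) - Fm f ψ xstar
      ≤ Fx + ((α * γ : ℝ) : EReal) * ((-((1 - η) * lam * (Fx - Fs)) : ℝ) : EReal) - Fs := by
        rw [← hFx, ← hFs]
        refine EReal.sub_le_sub (harmijo.trans (add_le_add le_rfl ?_)) le_rfl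
        exact mul_le_mul_of_nonneg_left hΔ (EReal.coe_nonneg.mpr (by positivity))
    _ = _ := by
      rw [hFx, hFs]
      norm_cast
      ring

/-- With f convex differentiable, x* a minimizer of F, F satisfying
μ-optimal-set strong convexity at x (μ > 0), σI ⪯ H ⪯ MI (M ≥ σ > 0), γ ∈ (0,1),
η ∈ [0,1), α ∈ (0,1], if Q(d) ≤ (1 − η)Q* and the Armijo condition
F(x + αd) ≤ F(x) + αγΔ holds, then
F(x + αd) − F* ≤ (1 − αγ(1 − η)μ/(μ + ‖H‖))(F(x) − F*). -/
theorem linear_rate_step_armijo {n : ℕ}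
    (f : EuclideanSpace ℝ (Fin n) → ℝ) (ψ : EuclideanSpace ℝ (Fin n) → EReal)
    (H : EuclideanSpace ℝ (Fin n) →L[ℝ] EuclideanSpace ℝ (Fin n))
    (x xstar d : EuclideanSpace ℝ (Fin n)) (μ σ M γ η α : ℝ)
    (hf : Differentiable ℝ f) (hfconv : ConvexOn ℝ Set.univ f)
    (hψconv : ConvexE ψ) (hψproper : ProperPsi ψ) (hψclosed : ClosedPsi ψ)
    (hdom : ψ x ≠ ⊤)
    (hmin : ∀ y, Fm f ψ xstar ≤ Fm f ψ y)
    (hμ : 0 < μ)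
    (hossc : ∀ lam : ℝ, lam ∈ Set.Icc (0 : ℝ) 1 →
        Fm f ψ (lam • x + (1 - lam) • xstar) ≤
          ((lam : ℝ) : EReal) * Fm f ψ x + ((1 - lam : ℝ) : EReal) * Fm f ψ xstar -
            ((μ * lam * (1 - lam) / 2 * ‖x - xstar‖ ^ 2 : ℝ) : EReal))
    (hH : SymmCLM H) (hσ : 0 < σ) (hσM : σ ≤ M)
    (hHlb : ∀ e : EuclideanSpace ℝ (Fin n), σ * ‖e‖ ^ 2 ≤ ⟪H e, e⟫)
    (hHub : ∀ e : EuclideanSpace ℝ (Fin n), ⟪H e, e⟫ ≤ M * ‖e‖ ^ 2)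
    (hγ0 : 0 < γ) (hγ1 : γ < 1) (hη0 : 0 ≤ η) (hη1 : η < 1)
    (hα0 : 0 < α) (hα1 : α ≤ 1)
    (happrox : Qm f ψ H x d ≤ ((1 - η : ℝ) : EReal) * ⨅ e, Qm f ψ H x e)
    (harmijo : Fm f ψ (x + α • d) ≤ Fm f ψ x + ((α * γ : ℝ) : EReal) * Dm f ψ x d) :
    Fm f ψ (x + α • d) - Fm f ψ xstar ≤
      ((1 - α * γ * (1 - η) * μ / (μ + ‖H‖) : ℝ) : EReal) * (Fm f ψ x - Fm f ψ xstar) :=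
  linear_rate_step_armijo_general f ψ H x xstar d μ σ γ η α hf hfconv hψproper hdom hmin hμ hossc hσ
    hHlb hγ0 hη1 hα0 happrox harmijo
end
end

section
/- Let f : ℝⁿ → ℝ be differentiable at x, ψ : ℝⁿ → ℝ ∪ {+∞} convex, proper, and closed with x ∈ dom ψ, and let H be a symmetric positive definite n×n matrix with smallest eigenvalue m > 0. If d* is a minimizer of Q(d) = ∇f(x)ᵀd + (1/2)dᵀHd + ψ(x+d) − ψ(x), then Q(d*) ≤ −(1/2)(d*)ᵀH d* ≤ −(m/2)‖d*‖². -/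
/-
Setting: minimize F = f + ψ over ℝⁿ (modeled as `EuclideanSpace ℝ (Fin n)`), where
f : ℝⁿ → ℝ is smooth and ψ : ℝⁿ → ℝ ∪ {+∞} (modeled as `EReal`-valued, never ⊥)
is convex, proper and closed.  The quadratic model at x with symmetric operator H is
Q(d) = ⟪∇f(x), d⟫ + (1/2)⟪H d, d⟫ + ψ(x+d) − ψ(x), and Δ(d) = ⟪∇f(x), d⟫ + ψ(x+d) − ψ(x).
-/

open scoped RealInnerProductSpace
open Set Filter Topology

noncomputable section

/-!
Write `Δ = ⟪∇f x, d*⟫ + ψ (x + d*) - ψ x` and `q = ⟪H d*, d*⟫`, so that `Q(d*) = Δ + q / 2`.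
Since `Q(d*) ≤ Q(0) = 0`, `ψ (x + d*)` is finite, and convexity of `ψ` along the segment from
`x` to `x + d*` gives `Q(t • d*) ≤ t Δ + t² q / 2` for `t ∈ [0, 1]`. Minimality of `d*` makes
`t = 1` a minimizer of this quadratic on `(0, 1]`, so its left derivative `Δ + q` is `≤ 0`, i.e.
`Q(d*) ≤ -q / 2`. The second inequality is the Rayleigh-quotient bound `q ≥ m ‖d*‖²`.
-/

theorem add_nonpos_of_forall_Ioo_le_quadratic {a q : ℝ}
    (h : ∀ t ∈ Ioo (0 : ℝ) 1, a + q / 2 ≤ t * a + t ^ 2 * q / 2) : a + q ≤ 0 := by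
  have hbound : ∀ t ∈ Ioo (0 : ℝ) 1, a ≤ -((1 + t) * q / 2) := fun t ht => by
    have h1t : 0 < 1 - t := sub_pos.2 ht.2
    refine le_of_mul_le_mul_left ?_ h1t
    nlinarith [h t ht]
  have hlim : Tendsto (fun t : ℝ => -((1 + t) * q / 2)) (𝓝[<] 1) (𝓝 (-q)) := by
    have : Tendsto (fun t : ℝ => -((1 + t) * q / 2)) (𝓝 1) (𝓝 (-((1 + 1) * q / 2))) :=
      (continuous_const.add continuous_id).mul continuous_const |>.div_const _ |>.neg |>.tendsto _
    convert this.mono_left nhdsWithin_le_nhds using 2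
    ring
  have := ge_of_tendsto hlim (eventually_of_mem (Ioo_mem_nhdsLT zero_lt_one) hbound)
  linarith

theorem mul_norm_sq_le_inner_of_mem_lowerBounds {E : Type*} [NormedAddCommGroup E]
    [InnerProductSpace ℝ E] {H : E →L[ℝ] E} {m : ℝ}
    (hm : m ∈ lowerBounds {r : ℝ | ∃ u : E, ‖u‖ = 1 ∧ r = ⟪H u, u⟫}) (d : E) :
    m * ‖d‖ ^ 2 ≤ ⟪H d, d⟫ := by
  rcases eq_or_ne d 0 with rfl | hd
  · simp
  have hd' : ‖d‖ ≠ 0 := norm_ne_zero_iff.2 hd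
  have hunit : ‖‖d‖⁻¹ • d‖ = 1 := by rw [norm_smul, norm_inv, norm_norm, inv_mul_cancel₀ hd']
  have hrayleigh := hm ⟨_, hunit, rfl⟩
  rw [map_smul, real_inner_smul_left, real_inner_smul_right, ← mul_assoc, ← sq] at hrayleigh
  calc m * ‖d‖ ^ 2 ≤ ‖d‖⁻¹ ^ 2 * ⟪H d, d⟫ * ‖d‖ ^ 2 :=
        mul_le_mul_of_nonneg_right hrayleigh (sq_nonneg _)
    _ = ⟪H d, d⟫ := by field_simp

section QuadraticModel

variable {n : ℕ} {f : EuclideanSpace ℝ (Fin n) → ℝ} {ψ : EuclideanSpace ℝ (Fin n) → EReal}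
  {H : EuclideanSpace ℝ (Fin n) →L[ℝ] EuclideanSpace ℝ (Fin n)}
  {x d : EuclideanSpace ℝ (Fin n)} {r s : ℝ}

theorem ConvexE.apply_add_smul_le (hψ : ConvexE ψ) (hr : ψ x = r) (hs : ψ (x + d) = s)
    {t : ℝ} (ht₀ : 0 ≤ t) (ht₁ : t ≤ 1) : ψ (x + t • d) ≤ ((t * s + (1 - t) * r : ℝ) : EReal) := by
  have h := hψ (x + d) x t (1 - t) ht₀ (sub_nonneg.2 ht₁) (by ring)
  rwa [show t • (x + d) + (1 - t) • x = x + t • d by module, hs, hr] at h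

theorem Qm_eq_coe (hr : ψ x = r) (hs : ψ (x + d) = s) :
    Qm f ψ H x d = ((⟪gradient f x, d⟫ + 1 / 2 * ⟪H d, d⟫ + s - r : ℝ) : EReal) := by
  rw [Qm, hr, hs]; rfl

theorem Qm_zero (hr : ψ x = r) : Qm f ψ H x 0 = 0 := by
  rw [Qm_eq_coe hr (by rwa [add_zero])]
  simp

theorem Qm_eq_top (hr : ψ x = r) (hs : ψ (x + d) = ⊤) : Qm f ψ H x d = ⊤ := by
  rw [Qm, hr, hs, EReal.coe_add_top, EReal.top_sub_coe]

theorem Qm_smul_le (hψ : ConvexE ψ) (hr : ψ x = r) (hs : ψ (x + d) = s)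
    {t : ℝ} (ht₀ : 0 ≤ t) (ht₁ : t ≤ 1) :
    Qm f ψ H x (t • d) ≤
      ((t * (⟪gradient f x, d⟫ + s - r) + t ^ 2 * ⟪H d, d⟫ / 2 : ℝ) : EReal) := by
  have hconv := hψ.apply_add_smul_le hr hs ht₀ ht₁
  have hlin : ⟪gradient f x, t • d⟫ + 1 / 2 * ⟪H (t • d), t • d⟫ + (t * s + (1 - t) * r) - r =
      t * (⟪gradient f x, d⟫ + s - r) + t ^ 2 * ⟪H d, d⟫ / 2 := by
    rw [map_smul, real_inner_smul_left, real_inner_smul_right, real_inner_smul_right]; ring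
  rw [Qm, hr, ← hlin, EReal.coe_sub, EReal.coe_add _ (t * s + _)]
  exact EReal.sub_le_sub (add_le_add le_rfl hconv) le_rfl

end QuadraticModel

theorem Q_value_bound_at_minimizer_general {n : ℕ}
    (f : EuclideanSpace ℝ (Fin n) → ℝ) (ψ : EuclideanSpace ℝ (Fin n) → EReal)
    (H : EuclideanSpace ℝ (Fin n) →L[ℝ] EuclideanSpace ℝ (Fin n))
    (x dstar : EuclideanSpace ℝ (Fin n)) (m : ℝ)
    (hψconv : ConvexE ψ) (hψproper : ProperPsi ψ)
    (hdom : ψ x ≠ ⊤)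
    (hm : IsSmallestEigenvalue H m)
    (hdstar : ∀ e, Qm f ψ H x dstar ≤ Qm f ψ H x e) :
    Qm f ψ H x dstar ≤ ((-(1 / 2) * ⟪H dstar, dstar⟫ : ℝ) : EReal) ∧
      -(1 / 2) * ⟪H dstar, dstar⟫ ≤ -(m / 2) * ‖dstar‖ ^ 2 := by
  have hr : ψ x = (ψ x).toReal := (EReal.coe_toReal hdom (hψproper.1 x)).symm
  have hs : ψ (x + dstar) = (ψ (x + dstar)).toReal := by
    refine (EReal.coe_toReal (fun htop => ?_) (hψproper.1 _)).symm
    have := (Qm_zero (f := f) (H := H) hr).symm ▸ hdstar 0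
    simp [Qm_eq_top hr htop] at this
  set Δ := ⟪gradient f x, dstar⟫ + (ψ (x + dstar)).toReal - (ψ x).toReal
  set q := ⟪H dstar, dstar⟫
  have hslope : Δ + q ≤ 0 := add_nonpos_of_forall_Ioo_le_quadratic fun t ht => by
    have h := (hdstar (t • dstar)).trans (Qm_smul_le hψconv hr hs ht.1.le ht.2.le)
    rw [Qm_eq_coe hr hs, EReal.coe_le_coe_iff] at h
    linarith
  refine ⟨?_, ?_⟩
  · rw [Qm_eq_coe hr hs, EReal.coe_le_coe_iff]
    linarith
  · linarith [mul_norm_sq_le_inner_of_mem_lowerBounds hm.2 dstar]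

/-- With H symmetric positive definite with smallest eigenvalue m > 0,
if d* minimizes Q, then Q(d*) ≤ −(1/2)(d*)ᵀHd* ≤ −(m/2)‖d*‖². -/
theorem Q_value_bound_at_minimizer {n : ℕ}
    (f : EuclideanSpace ℝ (Fin n) → ℝ) (ψ : EuclideanSpace ℝ (Fin n) → EReal)
    (H : EuclideanSpace ℝ (Fin n) →L[ℝ] EuclideanSpace ℝ (Fin n))
    (x dstar : EuclideanSpace ℝ (Fin n)) (m : ℝ)
    (hf : DifferentiableAt ℝ f x)
    (hψconv : ConvexE ψ) (hψproper : ProperPsi ψ) (hψclosed : ClosedPsi ψ)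
    (hdom : ψ x ≠ ⊤)
    (hH : SymmCLM H)
    (hHpd : ∀ e : EuclideanSpace ℝ (Fin n), e ≠ 0 → 0 < ⟪H e, e⟫)
    (hm : IsSmallestEigenvalue H m) (hm0 : 0 < m)
    (hdstar : ∀ e, Qm f ψ H x dstar ≤ Qm f ψ H x e) :
    Qm f ψ H x dstar ≤ ((-(1 / 2) * ⟪H dstar, dstar⟫ : ℝ) : EReal) ∧
      -(1 / 2) * ⟪H dstar, dstar⟫ ≤ -(m / 2) * ‖dstar‖ ^ 2 :=
  Q_value_bound_at_minimizer_general f ψ H x dstar m hψconv hψproper hdom hm hdstar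
end
end

section
/- Let f : ℝⁿ → ℝ be differentiable, ψ : ℝⁿ → ℝ ∪ {+∞} convex, proper, and closed, F = f + ψ bounded below by F*. Let γ ∈ (0,1), and consider iterates x^{t+1} = x^t + α_t d^t for t = 0, 1, …, k with step sizes α_t ∈ (0,1], symmetric positive semidefinite matrices H_t, directions d^t with Q_t(d^t) < 0, such that the Armijo condition F(x^{t+1}) ≤ F(x^t) + α_tγΔ_t holds for each t, where Q_t and Δ_t are the quadratic model and linear decrease at x^t with matrix H_t. Then min_{0 ≤ t ≤ k} |Q_t(d^t)| ≤ (F(x⁰) − F*) / (γ(k+1)·min_{0 ≤ t ≤ k} α_t). -/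
/-
Setting: minimize F = f + ψ over ℝⁿ (modeled as `EuclideanSpace ℝ (Fin n)`), where
f : ℝⁿ → ℝ is smooth and ψ : ℝⁿ → ℝ ∪ {+∞} (modeled as `EReal`-valued, never ⊥)
is convex, proper and closed.  The quadratic model at x with symmetric operator H is
Q(d) = ⟪∇f(x), d⟫ + (1/2)⟪H d, d⟫ + ψ(x+d) − ψ(x), and Δ(d) = ⟪∇f(x), d⟫ + ψ(x+d) − ψ(x).
-/

open scoped RealInnerProductSpace
open Set Filter Topology

noncomputable section

/-- With F = f + ψ bounded below by F*, iterates x^{t+1} = x^t + α_t d^t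
(α_t ∈ (0,1], H_t symmetric psd, Q_t(d^t) < 0) satisfying the Armijo condition at every
iteration, the minimum over 0 ≤ t ≤ k of |Q_t(d^t)| (= −Q_t(d^t)) satisfies
min_{0≤t≤k} |Q_t(d^t)| ≤ (F(x⁰) − F*) / (γ(k+1)·min_{0≤t≤k} α_t). -/
theorem min_Q_sublinear_nonconvex {n : ℕ}
    (f : EuclideanSpace ℝ (Fin n) → ℝ) (ψ : EuclideanSpace ℝ (Fin n) → EReal)
    (Fstar F0 γ : ℝ) (k : ℕ)
    (xseq dseq : ℕ → EuclideanSpace ℝ (Fin n)) (α : ℕ → ℝ)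
    (H : ℕ → (EuclideanSpace ℝ (Fin n) →L[ℝ] EuclideanSpace ℝ (Fin n)))
    (hf : Differentiable ℝ f)
    (hψconv : ConvexE ψ) (hψproper : ProperPsi ψ) (hψclosed : ClosedPsi ψ)
    (hbdd : ∀ y, (Fstar : EReal) ≤ Fm f ψ y)
    (hγ0 : 0 < γ) (hγ1 : γ < 1)
    (hstep : ∀ t, xseq (t + 1) = xseq t + α t • dseq t)
    (hα : ∀ t, α t ∈ Set.Ioc (0 : ℝ) 1)
    (hHsymm : ∀ t, SymmCLM (H t))
    (hHpsd : ∀ t, ∀ e : EuclideanSpace ℝ (Fin n), 0 ≤ ⟪(H t) e, e⟫)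
    (hQneg : ∀ t, Qm f ψ (H t) (xseq t) (dseq t) < 0)
    (harmijo : ∀ t, Fm f ψ (xseq (t + 1)) ≤
        Fm f ψ (xseq t) + ((α t * γ : ℝ) : EReal) * Dm f ψ (xseq t) (dseq t))
    (hF0 : Fm f ψ (xseq 0) = (F0 : EReal)) :
    (⨅ t ∈ Finset.range (k + 1), -Qm f ψ (H t) (xseq t) (dseq t)) ≤
      (((F0 - Fstar) / (γ * (k + 1) *
          ((Finset.range (k + 1)).inf' (Finset.nonempty_range_iff.mpr (Nat.succ_ne_zero k)) α))
        : ℝ) : EReal) := by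
  classical
  have hψbot := hψproper.1
  -- ψ is finite at each iterate
  have hψtop : ∀ t, ψ (xseq t) ≠ ⊤ := by
    intro t htop
    have hD : Dm f ψ (xseq t) (dseq t) = ⊥ := by
      unfold Dm; rw [htop, EReal.sub_top]
    have hc : (0:EReal) < ((α t * γ : ℝ) : EReal) := by
      exact_mod_cast mul_pos (hα t).1 hγ0
    have h1 := harmijo t
    rw [hD, EReal.mul_bot_of_pos hc, EReal.add_bot] at h1
    exact EReal.coe_ne_bot _ (le_bot_iff.mp (le_trans (hbdd (xseq (t+1))) h1))
  set a : ℕ → ℝ := fun t => (ψ (xseq t)).toReal with ha_def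
  have ha : ∀ t, ψ (xseq t) = ((a t : ℝ) : EReal) := fun t =>
    (EReal.coe_toReal (hψtop t) (hψbot _)).symm
  have hψdtop : ∀ t, ψ (xseq t + dseq t) ≠ ⊤ := by
    intro t htop
    have h1 := hQneg t
    unfold Qm at h1
    rw [htop, ha t] at h1
    have h2 : ((⟪gradient f (xseq t), dseq t⟫ + 1 / 2 * ⟪(H t) (dseq t), dseq t⟫ : ℝ) : EReal)
        + ⊤ - ((a t : ℝ) : EReal) = ⊤ := by
      rw [EReal.coe_add_top, EReal.top_sub_coe]
    rw [h2] at h1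
    exact not_top_lt h1
  set b : ℕ → ℝ := fun t => (ψ (xseq t + dseq t)).toReal with hb_def
  have hb : ∀ t, ψ (xseq t + dseq t) = ((b t : ℝ) : EReal) := fun t =>
    (EReal.coe_toReal (hψdtop t) (hψbot _)).symm
  set qR : ℕ → ℝ := fun t =>
    ⟪gradient f (xseq t), dseq t⟫ + 1 / 2 * ⟪(H t) (dseq t), dseq t⟫ + b t - a t with hqR_def
  set dR : ℕ → ℝ := fun t => ⟪gradient f (xseq t), dseq t⟫ + b t - a t with hdR_def
  have hQeq : ∀ t, Qm f ψ (H t) (xseq t) (dseq t) = ((qR t : ℝ) : EReal) := by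
    intro t; unfold Qm; rw [ha t, hb t]; norm_cast
  have hDeq : ∀ t, Dm f ψ (xseq t) (dseq t) = ((dR t : ℝ) : EReal) := by
    intro t; unfold Dm; rw [ha t, hb t]; norm_cast
  set φ : ℕ → ℝ := fun t => f (xseq t) + a t with hφ_def
  have hFeq : ∀ t, Fm f ψ (xseq t) = ((φ t : ℝ) : EReal) := by
    intro t; unfold Fm; rw [ha t]; norm_cast
  have hqneg : ∀ t, qR t < 0 := by
    intro t
    have := hQneg t
    rw [hQeq t] at this
    exact_mod_cast this
  have hdq : ∀ t, dR t ≤ qR t := by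
    intro t
    have := hHpsd t (dseq t)
    simp only [hqR_def, hdR_def]
    nlinarith
  -- real Armijo with Q
  have harm : ∀ t, φ (t+1) ≤ φ t + α t * γ * qR t := by
    intro t
    have h1 := harmijo t
    rw [hFeq, hFeq, hDeq] at h1
    have h2 : φ (t+1) ≤ φ t + α t * γ * dR t := by exact_mod_cast h1
    have h3 : α t * γ * dR t ≤ α t * γ * qR t :=
      mul_le_mul_of_nonneg_left (hdq t) (le_of_lt (mul_pos (hα t).1 hγ0))
    linarith
  have hsum : ∀ m : ℕ, φ m ≤ φ 0 + ∑ t ∈ Finset.range m, α t * γ * qR t := by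
    intro m
    induction m with
    | zero => simp
    | succ m ih =>
      rw [Finset.sum_range_succ]
      have := harm m
      linarith
  have hφ0 : φ 0 = F0 := by
    have := hFeq 0
    rw [hF0] at this
    exact_mod_cast this.symm
  have hlow : Fstar ≤ φ (k+1) := by
    have := hbdd (xseq (k+1))
    rw [hFeq] at this
    exact_mod_cast this
  set s := Finset.range (k+1) with hs_def
  have hne : s.Nonempty := Finset.nonempty_range_iff.mpr (Nat.succ_ne_zero k)
  set αmin := s.inf' hne α with hαmin_def
  set m := s.inf' hne (fun t => -qR t) with hm_def
  have hαmin_pos : 0 < αmin := (Finset.lt_inf'_iff hne).mpr (fun t _ => (hα t).1)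
  have hm_pos : 0 < m := (Finset.lt_inf'_iff hne).mpr (fun t _ => by
    have := hqneg t
    show (0:ℝ) < -qR t
    linarith)
  have hterm : ∀ t ∈ s, α t * γ * qR t ≤ γ * (-(αmin * m)) := by
    intro t ht
    have h1 : αmin ≤ α t := Finset.inf'_le α ht
    have h2 : m ≤ -qR t := Finset.inf'_le (fun t => -qR t) ht
    have h3 : αmin * m ≤ α t * (-qR t) :=
      mul_le_mul h1 h2 (le_of_lt hm_pos) (le_of_lt (lt_of_lt_of_le hαmin_pos h1))
    nlinarith
  have hsum2 : ∑ t ∈ s, α t * γ * qR t ≤ (k+1 : ℝ) * (γ * (-(αmin * m))) := by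
    have := Finset.sum_le_card_nsmul s (fun t => α t * γ * qR t) (γ * (-(αmin * m))) hterm
    simpa [hs_def, nsmul_eq_mul] using this
  have hkey : Fstar ≤ F0 - γ * (k+1) * αmin * m := by
    have h1 := hsum (k+1)
    have h2 := hlow
    rw [hφ0] at h1
    have : ∑ t ∈ Finset.range (k+1), α t * γ * qR t ≤ (k+1 : ℝ) * (γ * (-(αmin * m))) := hsum2
    nlinarith
  have hdenom : 0 < γ * ((k:ℝ)+1) * αmin := by positivity
  have hmle : m ≤ (F0 - Fstar) / (γ * ((k:ℝ)+1) * αmin) := by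
    rw [le_div_iff₀ hdenom]
    nlinarith
  obtain ⟨t0, ht0, hmeq⟩ := Finset.exists_mem_eq_inf' hne (fun t => -qR t)
  refine le_trans (iInf₂_le t0 ht0) ?_
  rw [hQeq t0, ← EReal.coe_neg]
  have : (-qR t0 : ℝ) ≤ (F0 - Fstar) / (γ * ((k:ℝ)+1) * αmin) := hmeq ▸ hmle
  exact_mod_cast this
end
end

section
/- Let f : ℝⁿ → ℝ be convex and differentiable with L-Lipschitz gradient, ψ : ℝⁿ → ℝ ∪ {+∞} convex, proper, and closed, F = f + ψ with minimizer x* and optimal value F*. Let H be symmetric with σI ⪯ H for some σ > 0, let γ, β ∈ (0,1), η ∈ [0,1), and suppose: (a) d satisfies Q(d) ≤ (1 − η)Q*; (b) α ∈ (0,1] satisfies both the Armijo condition F(x + αd) ≤ F(x) + αγΔ and the backtracking lower bound α ≥ min{1, 2β(1 − γ)σ/(L(1 + √η))}; and (c) F(x) − F* ≥ (x − x*)ᵀH(x − x*). Then F(x + αd) − F* ≤ (1 − (γ/2)·min{1 − η, 2(1 − √η)β(1 − γ)σ/L})·(F(x) − F*). -/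
/-
Setting: minimize F = f + ψ over ℝⁿ (modeled as `EuclideanSpace ℝ (Fin n)`), where
f : ℝⁿ → ℝ is smooth and ψ : ℝⁿ → ℝ ∪ {+∞} (modeled as `EReal`-valued, never ⊥)
is convex, proper and closed.  The quadratic model at x with symmetric operator H is
Q(d) = ⟪∇f(x), d⟫ + (1/2)⟪H d, d⟫ + ψ(x+d) − ψ(x), and Δ(d) = ⟪∇f(x), d⟫ + ψ(x+d) − ψ(x).
-/

open scoped RealInnerProductSpace
open Set Filter Topology

noncomputable section

lemma grad_convex_ineq {n : ℕ} (f : EuclideanSpace ℝ (Fin n) → ℝ)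
    (hf : Differentiable ℝ f) (hconv : ConvexOn ℝ Set.univ f)
    (x y : EuclideanSpace ℝ (Fin n)) :
    f x + ⟪gradient f x, y - x⟫ ≤ f y := by
  set v := y - x with hv
  have hfd : ∀ z : EuclideanSpace ℝ (Fin n), ∀ w, (fderiv ℝ f z) w = ⟪gradient f z, w⟫ := by
    intro z w
    rw [gradient, InnerProductSpace.toDual_symm_apply]
  set g : ℝ → ℝ := fun t => f (t • v + x) with hg
  have hgd : ∀ t : ℝ, HasDerivAt g ((fderiv ℝ f (t • v + x)) v) t := by
    intro t
    have h1 : HasDerivAt (fun t : ℝ => t • v + x) v t := by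
      simpa using ((hasDerivAt_id t).smul_const v).add_const x
    exact ((hf _).hasFDerivAt.comp_hasDerivAt t h1)
  have hgconv : ConvexOn ℝ Set.univ g := by
    refine ⟨convex_univ, ?_⟩
    intro s _ t _ a b ha hb hab
    have hkey : (a*s+b*t) • v + x = a • (s•v+x) + b • (t•v+x) := by
      calc (a*s+b*t) • v + x = a • (s•v) + b • (t•v) + (a+b) • x := by
            rw [hab, one_smul, add_smul, mul_smul, mul_smul]
        _ = a • (s•v+x) + b • (t•v+x) := by
            rw [add_smul, smul_add, smul_add]; abel
    show f ((a*s+b*t) • v + x) ≤ _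
    rw [hkey]
    exact hconv.2 (Set.mem_univ _) (Set.mem_univ _) ha hb hab
  have key := hgconv.le_slope_of_hasDerivAt (Set.mem_univ (0:ℝ)) (Set.mem_univ (1:ℝ))
    zero_lt_one (hgd 0)
  have hslope : slope g 0 1 = g 1 - g 0 := by simp [slope_def_field]
  have h0 : g 0 = f x := by simp [hg]
  have h1 : g 1 = f y := by simp [hg, hv]
  rw [hslope, h0, h1, hfd] at key
  simp only [zero_smul, zero_add] at key
  linarith

/-- With f convex, ∇f L-Lipschitz (L > 0), x* a minimizer of F,
σI ⪯ H (σ > 0), γ, β ∈ (0,1), η ∈ [0,1), if (a) Q(d) ≤ (1 − η)Q*, (b) α ∈ (0,1]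
satisfies the Armijo condition and α ≥ min{1, 2β(1 − γ)σ/(L(1 + √η))}, and
(c) F(x) − F* ≥ (x − x*)ᵀH(x − x*), then
F(x + αd) − F* ≤ (1 − (γ/2)·min{1 − η, 2(1 − √η)β(1 − γ)σ/L})(F(x) − F*). -/
theorem fast_linear_decrease_with_step_bound {n : ℕ}
    (f : EuclideanSpace ℝ (Fin n) → ℝ) (ψ : EuclideanSpace ℝ (Fin n) → EReal)
    (H : EuclideanSpace ℝ (Fin n) →L[ℝ] EuclideanSpace ℝ (Fin n))
    (x xstar d : EuclideanSpace ℝ (Fin n)) (L σ γ β η α : ℝ)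
    (hf : Differentiable ℝ f) (hfconv : ConvexOn ℝ Set.univ f)
    (hL : 0 < L) (hlip : ∀ y z, ‖gradient f y - gradient f z‖ ≤ L * ‖y - z‖)
    (hψconv : ConvexE ψ) (hψproper : ProperPsi ψ) (hψclosed : ClosedPsi ψ)
    (hdom : ψ x ≠ ⊤)
    (hmin : ∀ y, Fm f ψ xstar ≤ Fm f ψ y)
    (hH : SymmCLM H)
    (hσ : 0 < σ) (hHlb : ∀ e : EuclideanSpace ℝ (Fin n), σ * ‖e‖ ^ 2 ≤ ⟪H e, e⟫)
    (hγ0 : 0 < γ) (hγ1 : γ < 1) (hβ0 : 0 < β) (hβ1 : β < 1) (hη0 : 0 ≤ η) (hη1 : η < 1)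
    (happrox : Qm f ψ H x d ≤ ((1 - η : ℝ) : EReal) * ⨅ e, Qm f ψ H x e)
    (hα0 : 0 < α) (hα1 : α ≤ 1)
    (harmijo : Fm f ψ (x + α • d) ≤ Fm f ψ x + ((α * γ : ℝ) : EReal) * Dm f ψ x d)
    (hαlb : min 1 (2 * β * (1 - γ) * σ / (L * (1 + Real.sqrt η))) ≤ α)
    (hgrowth : ((⟪H (x - xstar), x - xstar⟫ : ℝ) : EReal) ≤ Fm f ψ x - Fm f ψ xstar) :
    Fm f ψ (x + α • d) - Fm f ψ xstar ≤
      ((1 - γ / 2 * min (1 - η) (2 * (1 - Real.sqrt η) * β * (1 - γ) * σ / L) : ℝ) : EReal) *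
        (Fm f ψ x - Fm f ψ xstar) := by
  obtain ⟨hψbot, -⟩ := hψproper
  obtain ⟨px, hpx⟩ : ∃ p : ℝ, ψ x = (p : EReal) := by
    lift ψ x to ℝ using ⟨hdom, hψbot x⟩ with p hp
    exact ⟨p, rfl⟩
  have hFmx : Fm f ψ x = ((f x + px : ℝ) : EReal) := by rw [Fm, hpx]; norm_cast
  have hψs_ne_top : ψ xstar ≠ ⊤ := by
    intro h
    have h2 := hmin x
    rw [hFmx, Fm, h, EReal.add_top_of_ne_bot (EReal.coe_ne_bot _)] at h2
    exact (EReal.coe_ne_top _) (top_le_iff.mp h2)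
  obtain ⟨ps, hps⟩ : ∃ p : ℝ, ψ xstar = (p : EReal) := by
    lift ψ xstar to ℝ using ⟨hψs_ne_top, hψbot xstar⟩ with p hp
    exact ⟨p, rfl⟩
  have hFms : Fm f ψ xstar = ((f xstar + ps : ℝ) : EReal) := by rw [Fm, hps]; norm_cast
  set DF : ℝ := (f x + px) - (f xstar + ps) with hDFdef
  have hDF0 : 0 ≤ DF := by
    have h := hmin x
    rw [hFmx, hFms] at h
    have : (f xstar + ps : ℝ) ≤ (f x + px : ℝ) := by exact_mod_cast h
    simp only [hDFdef]; linarith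
  have hgrowth' : ⟪H (x - xstar), x - xstar⟫ ≤ DF := by
    rw [hFmx, hFms, ← EReal.coe_sub] at hgrowth
    exact_mod_cast hgrowth
  -- bound on Q at xstar - x
  have hQstar : Qm f ψ H x (xstar - x) ≤ ((-DF/2 : ℝ) : EReal) := by
    have hxx : x + (xstar - x) = xstar := by abel
    rw [Qm, hxx, hps, hpx]
    have h2 : ⟪H (xstar - x), xstar - x⟫ = ⟪H (x - xstar), x - xstar⟫ := by
      have hneg : xstar - x = -(x - xstar) := by abel
      rw [hneg, map_neg, inner_neg_neg]
    have h1 := grad_convex_ineq f hf hfconv x xstar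
    have hreal : (⟪gradient f x, xstar - x⟫ + 1/2 * ⟪H (xstar - x), xstar - x⟫) + ps - px
        ≤ -DF/2 := by
      rw [h2]
      simp only [hDFdef] at hgrowth' ⊢
      linarith
    exact_mod_cast hreal
  have hInf : (⨅ e, Qm f ψ H x e) ≤ ((-DF/2 : ℝ) : EReal) :=
    le_trans (iInf_le _ (xstar - x)) hQstar
  have hQd : Qm f ψ H x d ≤ (((1-η) * (-DF/2) : ℝ) : EReal) := by
    refine le_trans happrox ?_
    rw [EReal.coe_mul]
    exact mul_le_mul_of_nonneg_left hInf (by exact_mod_cast (by linarith : (0:ℝ) ≤ 1 - η))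
  have hψd_ne_top : ψ (x + d) ≠ ⊤ := by
    intro h
    rw [Qm, h, hpx, EReal.add_top_of_ne_bot (EReal.coe_ne_bot _), EReal.top_sub_coe] at hQd
    exact (EReal.coe_ne_top _) (top_le_iff.mp hQd).symm.symm
  obtain ⟨q, hq⟩ : ∃ p : ℝ, ψ (x + d) = (p : EReal) := by
    lift ψ (x + d) to ℝ using ⟨hψd_ne_top, hψbot (x + d)⟩ with p hp
    exact ⟨p, rfl⟩
  have hQd_real : ⟪gradient f x, d⟫ + 1/2 * ⟪H d, d⟫ + q - px ≤ (1-η) * (-DF/2) := by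
    rw [Qm, hq, hpx] at hQd
    exact_mod_cast hQd
  have hr2 : (0:ℝ) ≤ ⟪H d, d⟫ :=
    le_trans (mul_nonneg hσ.le (by positivity)) (hHlb d)
  set δ : ℝ := ⟪gradient f x, d⟫ + q - px with hδdef
  have hδ : δ ≤ (1-η) * (-DF/2) := by simp only [hδdef]; linarith
  have hDm : Dm f ψ x d = (δ : EReal) := by rw [Dm, hq, hpx]; norm_cast
  -- Armijo in real form
  have harm : Fm f ψ (x + α • d) ≤ (((f x + px) + (α*γ)*δ : ℝ) : EReal) := by
    refine le_trans harmijo (le_of_eq ?_)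
    rw [hFmx, hDm]
    norm_cast
  -- real constants
  set s : ℝ := Real.sqrt η with hsdef
  have hs2 : s^2 = η := Real.sq_sqrt hη0
  have hs0 : 0 ≤ s := Real.sqrt_nonneg η
  have hs1 : 0 < 1 + s := by linarith
  set t : ℝ := 2*β*(1-γ)*σ/(L*(1+s)) with htdef
  set c : ℝ := min (1-η) (2*(1-s)*β*(1-γ)*σ/L) with hcdef
  have ht_eq : t * (1-η) = 2*(1-s)*β*(1-γ)*σ/L := by
    rw [htdef, ← hs2]
    field_simp
    ring
  have hc_eq : c = min 1 t * (1-η) := by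
    rw [hcdef, min_mul_of_nonneg _ _ (by linarith : (0:ℝ) ≤ 1-η), one_mul, ht_eq]
  have hαc : c ≤ α * (1-η) := by
    rw [hc_eq]
    exact mul_le_mul_of_nonneg_right hαlb (by linarith)
  -- final real inequality
  have hfinal : (f x + px) + (α*γ)*δ - (f xstar + ps) ≤ (1 - γ/2 * c) * DF := by
    have h1 : (α*γ)*δ ≤ (α*γ)*((1-η) * (-DF/2)) :=
      mul_le_mul_of_nonneg_left hδ (by positivity)
    have h2 : 0 ≤ (γ * DF / 2) * (α*(1-η) - c) := by
      apply mul_nonneg (by positivity) (by linarith)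
    simp only [hDFdef] at h1 h2 ⊢
    nlinarith [h1, h2]
  -- conclude
  rw [hFmx, hFms, ← EReal.coe_sub, ← EReal.coe_mul]
  calc Fm f ψ (x + α • d) - ((f xstar + ps : ℝ) : EReal)
      ≤ (((f x + px) + (α*γ)*δ : ℝ) : EReal) - ((f xstar + ps : ℝ) : EReal) :=
        EReal.sub_le_sub harm le_rfl
    _ = (((f x + px) + (α*γ)*δ - (f xstar + ps) : ℝ) : EReal) := by norm_cast
    _ ≤ (((1 - γ/2 * c) * DF : ℝ) : EReal) := by exact_mod_cast hfinal
    _ = _ := by rw [hcdef, hDFdef]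
end
end
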